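/- arXiv:0811.2365 — 2 statements merged into one kernel-verified Lean document; each statement's English description precedes it below -/
import Mathlib

section
/- Let p be a monic real polynomial of degree n having n distinct real roots, and let q = p′/n. Then: (a) SRemS(p,q) has no degree breakdown and all the signs ε_k in its defining recurrence are equal to +1, so that the tridiagonal matrix Td(p,q) is symmetric; (b) for every k, the real roots of p_{k+1} strictly interlace those of p_k; and (c) the Hankel matrix H_n(q/p) is positive definite. -/
open Polynomial Matrix BigOperators Finset

/-- Data witnessing that the signed remainders sequence `SRemS(p,q)` of the monic
polynomials `p` (degree `n`) and `q` (degree `n-1`) has no degree breakdown: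
a sequence of monic polynomials `P k` of degree `n - k` with `P 0 = p`, `P 1 = q`,
satisfying the recurrence `P k = (X - α_{k+1})·P (k+1) - ε_{k+1}·β_{k+1}²·P (k+2)`
with `β_{k+1} > 0` and `ε_{k+1} = ±1`, and `P (n-1) = X - α_n`. -/
structure SRemSData (n : ℕ) (p q : Polynomial ℝ) : Type where
  P : ℕ → Polynomial ℝ
  α : ℕ → ℝ
  β : ℕ → ℝ
  ε : ℕ → ℝ
  hP0 : P 0 = p
  hP1 : P 1 = q
  hmonic : ∀ k, k ≤ n → (P k).Monic
  hdeg : ∀ k, k ≤ n → (P k).natDegree = n - k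
  hrec : ∀ k, k + 2 ≤ n →
    P k = (Polynomial.X - Polynomial.C (α (k + 1))) * P (k + 1)
            - Polynomial.C (ε (k + 1) * β (k + 1) ^ 2) * P (k + 2)
  hlast : 1 ≤ n → P (n - 1) = Polynomial.X - Polynomial.C (α n)
  hβ : ∀ k, 1 ≤ k → k ≤ n - 1 → 0 < β k
  hε : ∀ k, 1 ≤ k → k ≤ n - 1 → ε k = 1 ∨ ε k = -1

/-- tridiagonal matrix -/
def tridiag (n : ℕ) (a b c : ℕ → ℝ) : Matrix (Fin n) (Fin n) ℝ :=
  Matrix.of fun i j =>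
    if (i : ℕ) = (j : ℕ) then a (n - (i : ℕ))
    else if (i : ℕ) = (j : ℕ) + 1 then b (n - 1 - (j : ℕ))
    else if (j : ℕ) = (i : ℕ) + 1 then c (n - 1 - (i : ℕ))
    else 0

/-- The tridiagonal matrix `Td(p,q)` associated to a no-degree-breakdown signed
remainders sequence. -/
def SRemSData.td {n : ℕ} {p q : Polynomial ℝ} (d : SRemSData n p q) :
    Matrix (Fin n) (Fin n) ℝ :=
  tridiag n d.α d.β fun k => d.ε k * d.β k


/-- The coefficients `(s_j)` of the expansion `q(x)/p(x) = Σ_{j≥0} s_j·x^{−j−1}` at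
infinity. -/
noncomputable def hankelSeq (n : ℕ) (p q : Polynomial ℝ) : ℕ → ℝ := fun j =>
  PowerSeries.coeff j
    (((Polynomial.reflect (n - 1) q : Polynomial ℝ) : PowerSeries ℝ) *
      ((Polynomial.reflect n p : Polynomial ℝ) : PowerSeries ℝ)⁻¹)

/-- The Hankel matrix `H_n(q/p) = (s_{i+j})_{0≤i,j≤n−1}`. -/
noncomputable def hankelMat (n : ℕ) (p q : Polynomial ℝ) : Matrix (Fin n) (Fin n) ℝ :=
  Matrix.of fun i j : Fin n => hankelSeq n p q ((i : ℕ) + (j : ℕ))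

/-- The real roots of `g` strictly interlace those of `f`: the real roots of `f` can be
listed as `x_0 < x_1 < ⋯ < x_m` and those of `g` as `y_0 < ⋯ < y_{m-1}` with
`x_i < y_i < x_{i+1}` for every `i`. -/
def StrictlyInterlaces (f g : Polynomial ℝ) : Prop :=
  ∃ m : ℕ, ∃ x : Fin (m + 1) → ℝ, ∃ y : Fin m → ℝ,
    StrictMono x ∧ StrictMono y ∧
    (∀ t : ℝ, f.IsRoot t ↔ t ∈ Set.range x) ∧
    (∀ t : ℝ, g.IsRoot t ↔ t ∈ Set.range y) ∧
    ∀ i : Fin m, x i.castSucc < y i ∧ y i < x i.succ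

/-!
Write `p = ∏ (X - xᵢ)` with `x₀ < ⋯ < xₙ₋₁`. A polynomial of degree at most `m` whose values at
`m + 1` increasing points alternate in sign has, by the intermediate value theorem, a root strictly
between any two consecutive points; so it splits, with roots interlacing the points and with the
sign of its leading coefficient read off at the last point. This applies first to `q = p'/n` at the
roots of `p`, and then, inductively, to each remainder `(X - α) pₖ₊₁ - pₖ`: at the roots of `pₖ₊₁`
it takes the values of `-pₖ`, which alternate because the roots of `pₖ` and `pₖ₊₁` interlace. Its
leading coefficient is therefore positive, so `ε = 1` and `β` is its square root.

For the Hankel matrix, `q/p = (1/n) ∑ 1/(x - xᵢ)` gives `sⱼ = (1/n) ∑ xᵢʲ`, so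
`H_n(q/p) = (1/n) VᵀV` with `V` the Vandermonde matrix of the distinct roots `xᵢ`, which is
invertible.
-/

lemma neg_one_pow_card_mul_prod_sub_pos {ι : Type*} (s : Finset ι) (x : ι → ℝ) (t : ℝ)
    (h : ∀ j ∈ s, x j ≠ t) :
    0 < (-1 : ℝ) ^ #{j ∈ s | t < x j} * ∏ j ∈ s, (t - x j) := by
  have hbelow : (-1 : ℝ) ^ #{j ∈ s | t < x j} * ∏ j ∈ s with t < x j, (t - x j) =
      ∏ j ∈ s with t < x j, (x j - t) := by
    rw [← prod_const, ← prod_mul_distrib]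
    exact prod_congr rfl fun _ _ => by ring
  rw [← prod_filter_mul_prod_filter_not s (fun j => t < x j), ← mul_assoc, hbelow]
  refine mul_pos (prod_pos fun j hj => sub_pos.2 (mem_filter.1 hj).2) (prod_pos fun j hj => ?_)
  obtain ⟨hjs, hjt⟩ := mem_filter.1 hj
  exact sub_pos.2 ((not_lt.1 hjt).lt_of_ne (h j hjs))

lemma neg_one_pow_mul_prod_sub_pos_of_mem_Ioo {m : ℕ} {x : Fin (m + 2) → ℝ} (hx : StrictMono x)
    {i : Fin (m + 1)} {t : ℝ} (ht : t ∈ Set.Ioo (x i.castSucc) (x i.succ)) :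
    0 < (-1 : ℝ) ^ (m + 1 - i) * ∏ j, (t - x j) := by
  have habove : univ.filter (fun j => t < x j) = Ioi i.castSucc := by
    ext j
    simp only [mem_filter, mem_univ, true_and, mem_Ioi]
    refine ⟨fun hj => hx.lt_iff_lt.1 (ht.1.trans hj), fun hj => ht.2.trans_le (hx.monotone ?_)⟩
    exact Fin.castSucc_lt_iff_succ_le.1 hj
  have hcard : #(univ.filter fun j => t < x j) = m + 1 - i := by
    rw [habove, Fin.card_Ioi, Fin.val_castSucc]; omega
  rw [← hcard]
  refine neg_one_pow_card_mul_prod_sub_pos _ _ _ fun j _ hj => ?_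
  rcases le_or_gt j i.castSucc with hji | hji
  · linarith [hx.monotone hji, ht.1]
  · linarith [hx.monotone (Fin.castSucc_lt_iff_succ_le.1 hji), ht.2]

lemma neg_one_pow_mul_prod_erase_sub_pos {m : ℕ} {x : Fin (m + 1) → ℝ} (hx : StrictMono x)
    (i : Fin (m + 1)) :
    0 < (-1 : ℝ) ^ (m - i) * ∏ j ∈ univ.erase i, (x i - x j) := by
  have habove : {j ∈ univ.erase i | x i < x j} = Ioi i := by
    ext j
    simp only [mem_filter, mem_erase, mem_univ, and_true, mem_Ioi, hx.lt_iff_lt]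
    exact ⟨And.right, fun hj => ⟨hj.ne', hj⟩⟩
  have hcard : #{j ∈ univ.erase i | x i < x j} = m - i := by
    rw [habove, Fin.card_Ioi]; omega
  rw [← hcard]
  exact neg_one_pow_card_mul_prod_sub_pos _ _ _ fun j hj => hx.injective.ne (ne_of_mem_erase hj)

lemma exists_isRoot_mem_Ioo_of_alternating {m : ℕ} {y : Fin (m + 1) → ℝ} (hy : StrictMono y)
    {r : ℝ[X]} (hr : ∀ i : Fin (m + 1), 0 < (-1 : ℝ) ^ (m - i) * r.eval (y i)) (i : Fin m) :
    ∃ t ∈ Set.Ioo (y i.castSucc) (y i.succ), r.IsRoot t := by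
  have hleft := hr i.castSucc
  have hright := hr i.succ
  rw [Fin.val_castSucc, show m - i = m - (i + 1) + 1 by omega, pow_succ] at hleft
  rw [Fin.val_succ] at hright
  have hle := (hy (Fin.castSucc_lt_succ (i := i))).le
  rcases neg_one_pow_eq_or ℝ (m - (i + 1)) with hs | hs <;> rw [hs] at hleft hright
  · obtain ⟨t, ht, hroot⟩ := intermediate_value_Ioo hle r.continuousOn
      (show (0 : ℝ) ∈ Set.Ioo _ _ from ⟨by linarith, by linarith⟩)
    exact ⟨t, ht, hroot⟩
  · obtain ⟨t, ht, hroot⟩ := intermediate_value_Ioo' hle r.continuousOn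
      (show (0 : ℝ) ∈ Set.Ioo _ _ from ⟨by linarith, by linarith⟩)
    exact ⟨t, ht, hroot⟩

lemma eq_C_leadingCoeff_mul_prod_X_sub_C_of_isRoot {m : ℕ} {r : ℝ[X]} (hr : r ≠ 0)
    (hdeg : r.natDegree ≤ m) {z : Fin m → ℝ} (hz : Function.Injective z)
    (hroot : ∀ i, r.IsRoot (z i)) :
    r = C r.leadingCoeff * ∏ i, (X - C (z i)) := by
  have hle : univ.val.map z ≤ r.roots := by
    refine (Multiset.le_iff_subset (univ.nodup.map hz)).2 fun t ht => ?_
    obtain ⟨i, -, rfl⟩ := Multiset.mem_map.1 ht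
    exact (mem_roots hr).2 (hroot i)
  have hcard : Multiset.card r.roots ≤ Multiset.card (univ.val.map z) := by
    simpa using (card_roots' r).trans hdeg
  have hroots := Multiset.eq_of_le_of_card_le hle hcard
  have hsplit : Multiset.card r.roots = r.natDegree :=
    (card_roots' r).antisymm (by simpa [← hroots] using hdeg)
  conv_lhs => rw [← C_leadingCoeff_mul_prod_multiset_X_sub_C hsplit, ← hroots, Multiset.map_map]
  rfl

lemma exists_interlacing_roots_of_alternating {m : ℕ} {y : Fin (m + 1) → ℝ} (hy : StrictMono y)
    {r : ℝ[X]} (hdeg : r.natDegree ≤ m)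
    (hr : ∀ i : Fin (m + 1), 0 < (-1 : ℝ) ^ (m - i) * r.eval (y i)) :
    0 < r.leadingCoeff ∧ ∃ z : Fin m → ℝ, StrictMono z ∧
      (∀ i, y i.castSucc < z i ∧ z i < y i.succ) ∧ r = C r.leadingCoeff * ∏ i, (X - C (z i)) := by
  choose z hz hroot using exists_isRoot_mem_Ioo_of_alternating hy hr
  have hzmono : StrictMono z := fun i j hij =>
    (hz i).2.trans <| (hy.monotone (Fin.succ_le_castSucc_iff.2 hij)).trans_lt (hz j).1
  have hr0 : r ≠ 0 := by
    rintro rfl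
    simpa using hr 0
  have hfac := eq_C_leadingCoeff_mul_prod_X_sub_C_of_isRoot hr0 hdeg hzmono.injective hroot
  refine ⟨?_, z, hzmono, hz, hfac⟩
  have hlast := hr (Fin.last m)
  rw [Fin.val_last, Nat.sub_self, pow_zero, one_mul, hfac, eval_mul, eval_C, eval_prod] at hlast
  refine pos_of_mul_pos_left hlast (prod_nonneg fun i _ => ?_)
  simp only [eval_sub, eval_X, eval_C, sub_nonneg]
  exact ((hz i).2.trans_le (hy.monotone (Fin.le_last _))).le

def InterlacedSplitting (m : ℕ) (f g : ℝ[X]) : Prop :=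
  ∃ x : Fin (m + 1) → ℝ, ∃ y : Fin m → ℝ, StrictMono x ∧ StrictMono y ∧
    (∀ i, x i.castSucc < y i ∧ y i < x i.succ) ∧
    f = ∏ i, (X - C (x i)) ∧ g = ∏ i, (X - C (y i))

lemma isRoot_prod_X_sub_C_iff {ι : Type*} [Fintype ι] (x : ι → ℝ) (t : ℝ) :
    (∏ i, (X - C (x i))).IsRoot t ↔ t ∈ Set.range x := by
  rw [isRoot_prod]
  simp only [mem_univ, true_and, root_X_sub_C, Set.mem_range]

lemma InterlacedSplitting.strictlyInterlaces {m : ℕ} {f g : ℝ[X]}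
    (h : InterlacedSplitting m f g) : StrictlyInterlaces f g := by
  obtain ⟨x, y, hx, hy, hxy, rfl, rfl⟩ := h
  exact ⟨m, x, y, hx, hy, isRoot_prod_X_sub_C_iff x, isRoot_prod_X_sub_C_iff y, hxy⟩

lemma natDegree_sub_le_of_nextCoeff_eq {R : Type*} [Ring R] {a b : R[X]} {m : ℕ}
    (ha : a.Monic) (hb : b.Monic) (hda : a.natDegree = m + 2) (hdb : b.natDegree = m + 2)
    (hnext : a.nextCoeff = b.nextCoeff) : (a - b).natDegree ≤ m := by
  rw [natDegree_le_iff_coeff_eq_zero]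
  intro k hk
  rw [coeff_sub, sub_eq_zero]
  obtain rfl | rfl | hk : k = m + 1 ∨ k = m + 2 ∨ m + 2 < k := by omega
  · simpa [nextCoeff_of_natDegree_pos, hda, hdb] using hnext
  · rw [← hda, ha.coeff_natDegree, hda, ← hdb, hb.coeff_natDegree]
  · rw [coeff_eq_zero_of_natDegree_lt (hda ▸ hk), coeff_eq_zero_of_natDegree_lt (hdb ▸ hk)]

/-- `α` is chosen so that the two top coefficients cancel in `sremsRem`; using `nextCoeff` rather
than a coefficient at a fixed index keeps this right in the last step, where `g = 1`. -/
noncomputable def sremsAlpha (f g : ℝ[X]) : ℝ := g.nextCoeff - f.nextCoeff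

noncomputable def sremsRem (f g : ℝ[X]) : ℝ[X] := (X - C (sremsAlpha f g)) * g - f

noncomputable def sremsNext (f g : ℝ[X]) : ℝ[X] := C (sremsRem f g).leadingCoeff⁻¹ * sremsRem f g

noncomputable def srems (p q : ℝ[X]) : ℕ → ℝ[X]
  | 0 => p
  | 1 => q
  | k + 2 => sremsNext (srems p q k) (srems p q (k + 1))

lemma natDegree_sremsRem_le {m : ℕ} {f g : ℝ[X]} (hf : f.Monic) (hg : g.Monic)
    (hdf : f.natDegree = m + 2) (hdg : g.natDegree = m + 1) :
    (sremsRem f g).natDegree ≤ m := by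
  have hmonic := (monic_X_sub_C (sremsAlpha f g)).mul hg
  refine natDegree_sub_le_of_nextCoeff_eq hmonic hf ?_ hdf ?_
  · rw [(monic_X_sub_C _).natDegree_mul hg, natDegree_X_sub_C, hdg, add_comm]
  · rw [(monic_X_sub_C _).nextCoeff_mul hg, nextCoeff_X_sub_C, sremsAlpha]
    ring

lemma eq_sub_C_mul_sremsNext {f g : ℝ[X]} (h : 0 < (sremsRem f g).leadingCoeff) :
    f = (X - C (sremsAlpha f g)) * g - C (√(sremsRem f g).leadingCoeff ^ 2) * sremsNext f g := by
  rw [Real.sq_sqrt h.le, sremsNext, ← mul_assoc, ← C_mul, mul_inv_cancel₀ h.ne', C_1, one_mul,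
    sremsRem]
  ring

lemma InterlacedSplitting.next {m : ℕ} {f g : ℝ[X]} (h : InterlacedSplitting (m + 1) f g) :
    0 < (sremsRem f g).leadingCoeff ∧ InterlacedSplitting m g (sremsNext f g) := by
  obtain ⟨x, y, hx, hy, hxy, rfl, rfl⟩ := h
  have hdeg := natDegree_sremsRem_le (m := m) (monic_prod_X_sub_C x univ)
    (monic_prod_X_sub_C y univ)
    (by simp) (by simp)
  have hsign : ∀ i : Fin (m + 1), 0 < (-1 : ℝ) ^ (m - i) *
      (sremsRem (∏ j, (X - C (x j))) (∏ j, (X - C (y j)))).eval (y i) := by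
    intro i
    have hroot : (∏ j, (X - C (y j))).eval (y i) = 0 :=
      (isRoot_prod_X_sub_C_iff y _).2 ⟨i, rfl⟩
    have hpos := neg_one_pow_mul_prod_sub_pos_of_mem_Ioo hx (hxy i)
    rw [show m + 1 - i = m - i + 1 by omega, pow_succ] at hpos
    simpa [sremsRem, hroot, eval_prod] using hpos
  obtain ⟨hlc, z, hz, hyz, hfac⟩ := exists_interlacing_roots_of_alternating hy hdeg hsign
  refine ⟨hlc, y, z, hy, hz, hyz, rfl, ?_⟩
  rw [sremsNext]
  nth_rw 2 [hfac]
  rw [← mul_assoc, ← C_mul, inv_mul_cancel₀ hlc.ne', C_1, one_mul]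

lemma interlacedSplitting_srems {m : ℕ} {p q : ℝ[X]} (h : InterlacedSplitting m p q) :
    ∀ k ≤ m, InterlacedSplitting (m - k) (srems p q k) (srems p q (k + 1))
  | 0, _ => h
  | k + 1, hk => by
    have hk' := interlacedSplitting_srems h k (by omega)
    rw [show m - k = m - (k + 1) + 1 by omega] at hk'
    exact hk'.next.2

lemma interlacedSplitting_derivative {m : ℕ} {x : Fin (m + 1) → ℝ} (hx : StrictMono x) :
    InterlacedSplitting m (∏ i, (X - C (x i)))
      (((m + 1 : ℕ) : ℝ)⁻¹ • derivative (∏ i, (X - C (x i)))) := by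
  set p := ∏ i, (X - C (x i)) with hp
  set q := ((m + 1 : ℕ) : ℝ)⁻¹ • derivative p
  have hpdeg : p.natDegree = m + 1 := by simp [hp]
  have heval : ∀ i, (derivative p).eval (x i) = ∏ j ∈ univ.erase i, (x i - x j) := by
    intro i
    rw [hp, ← mul_prod_erase univ _ (mem_univ i), derivative_mul]
    simp [eval_prod]
  have hsign : ∀ i : Fin (m + 1), 0 < (-1 : ℝ) ^ (m - i) * q.eval (x i) := by
    intro i
    rw [eval_smul, heval, smul_eq_mul, mul_left_comm]
    exact mul_pos (by positivity) (neg_one_pow_mul_prod_erase_sub_pos hx i)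
  have hqdeg : q.natDegree ≤ m :=
    (natDegree_smul_le _ _).trans ((natDegree_derivative_le p).trans (by omega))
  obtain ⟨-, z, hz, hxz, hfac⟩ := exists_interlacing_roots_of_alternating hx hqdeg hsign
  have hlc : q.leadingCoeff = 1 := by
    have hp1 : p.coeff (m + 1) = 1 := hpdeg ▸ (monic_prod_X_sub_C x univ).coeff_natDegree
    have hz1 : (∏ i, (X - C (z i))).coeff m = 1 := by
      have hzdeg : (∏ i, (X - C (z i))).natDegree = m := by simp
      simpa only [hzdeg] using (monic_prod_X_sub_C z univ).coeff_natDegree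
    have hcoeff : q.coeff m = 1 := by
      rw [coeff_smul, coeff_derivative, hp1, smul_eq_mul]
      push_cast
      field_simp
    rwa [hfac, coeff_C_mul, hz1, mul_one] at hcoeff
  exact ⟨x, z, hx, hz, hxz, rfl, by rw [hfac, hlc, C_1, one_mul]⟩

lemma srems_add_two (p q : ℝ[X]) (k : ℕ) :
    srems p q (k + 2) = sremsNext (srems p q k) (srems p q (k + 1)) := rfl

lemma InterlacedSplitting.srems_monic_natDegree {N : ℕ} {p q : ℝ[X]}
    (h : InterlacedSplitting N p q) {k : ℕ} (hk : k ≤ N + 1) :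
    (srems p q k).Monic ∧ (srems p q k).natDegree = N + 1 - k := by
  rcases k with _ | k
  · obtain ⟨x, -, -, -, -, hp, -⟩ := h
    rw [srems, hp]
    exact ⟨monic_prod_X_sub_C _ _, by simp⟩
  · obtain ⟨-, y, -, -, -, -, hy⟩ := interlacedSplitting_srems h k (by omega)
    rw [hy]
    exact ⟨monic_prod_X_sub_C _ _, by simp⟩

lemma InterlacedSplitting.leadingCoeff_sremsRem_pos {N : ℕ} {p q : ℝ[X]}
    (h : InterlacedSplitting N p q) {k : ℕ} (hk : k + 1 ≤ N) :
    0 < (sremsRem (srems p q k) (srems p q (k + 1))).leadingCoeff := by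
  have hk' := interlacedSplitting_srems h k (by omega)
  rw [show N - k = N - (k + 1) + 1 by omega] at hk'
  exact hk'.next.1

noncomputable def InterlacedSplitting.sremsData {N : ℕ} {p q : ℝ[X]}
    (h : InterlacedSplitting N p q) : SRemSData (N + 1) p q where
  P := srems p q
  α k := sremsAlpha (srems p q (k - 1)) (srems p q k)
  β k := √(sremsRem (srems p q (k - 1)) (srems p q k)).leadingCoeff
  ε _ := 1
  hP0 := rfl
  hP1 := rfl
  hmonic _ hk := (h.srems_monic_natDegree hk).1
  hdeg _ hk := (h.srems_monic_natDegree hk).2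
  hrec k hk := by
    simpa only [one_mul, Nat.add_sub_cancel, srems_add_two] using
      eq_sub_C_mul_sremsNext (h.leadingCoeff_sremsRem_pos (k := k) (by omega))
  hlast _ := by
    have hN := interlacedSplitting_srems h N le_rfl
    rw [Nat.sub_self] at hN
    obtain ⟨x, y, -, -, -, hx, hy⟩ := hN
    rw [Nat.add_sub_cancel, hx, hy, sremsAlpha, Fin.prod_univ_one, Fin.prod_univ_zero]
    have hone : (1 : ℝ[X]).nextCoeff = 0 := by rw [← C_1]; exact nextCoeff_C_eq_zero 1
    simp [nextCoeff_X_sub_C, hone]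
  hβ k hk hkN := by
    obtain ⟨k, rfl⟩ : ∃ j, k = j + 1 := ⟨k - 1, by omega⟩
    exact Real.sqrt_pos.2 (h.leadingCoeff_sremsRem_pos (by omega))
  hε _ _ _ := Or.inl rfl

lemma tridiag_isSymm (n : ℕ) (a b c : ℕ → ℝ) (h : ∀ k, c k = b k) :
    (tridiag n a b c).IsSymm := by
  ext i j
  simp only [transpose_apply, tridiag, of_apply, h]
  split_ifs <;> first | rfl | omega | (congr 1; omega)

lemma reflect_sum {R ι : Type*} [Semiring R] (s : Finset ι) (f : ι → R[X]) (N : ℕ) :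
    reflect N (∑ i ∈ s, f i) = ∑ i ∈ s, reflect N (f i) :=
  map_sum ({ toFun := reflect N, map_zero' := reflect_zero, map_add' := (reflect_add · · N) } :
    R[X] →+ R[X]) f s

lemma reflect_prod_X_sub_C {R ι : Type*} [CommRing R] [Nontrivial R] (s : Finset ι)
    (x : ι → R) : reflect #s (∏ i ∈ s, (X - C (x i))) = ∏ i ∈ s, (1 - C (x i) * X) := by
  classical
  induction s using Finset.induction with
  | empty => simp [reflect_one]
  | insert a s ha ih =>
    rw [prod_insert ha, prod_insert ha, card_insert_of_notMem ha, add_comm,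
      reflect_mul _ _ (natDegree_X_sub_C_le _) (by simp), ih, reflect_sub, reflect_one_X,
      reflect_C, pow_one]

lemma coe_one_sub_C_mul_X_mul_mk_pow {R : Type*} [CommRing R] (a : R) :
    ((1 - C a * X : R[X]) : PowerSeries R) * PowerSeries.mk (a ^ ·) = 1 := by
  have h := congrArg (PowerSeries.rescale a) (PowerSeries.mk_one_mul_one_sub_eq_one R)
  rw [map_mul, map_sub, map_one, PowerSeries.rescale_X, PowerSeries.rescale_mk] at h
  rw [mul_comm, ← h]
  simp

lemma hankelSeq_prod_X_sub_C {n : ℕ} (x : Fin n → ℝ) (c : ℝ) (j : ℕ) :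
    hankelSeq n (∏ i, (X - C (x i))) (c • derivative (∏ i, (X - C (x i)))) j =
      c * ∑ i, x i ^ j := by
  let φ := Polynomial.coeToPowerSeries.ringHom (R := ℝ)
  set u : Fin n → PowerSeries ℝ := fun i => φ (1 - C (x i) * X)
  set G : Fin n → PowerSeries ℝ := fun i => PowerSeries.mk (x i ^ ·)
  have hGu : ∀ i, G i * u i = 1 := fun i =>
    (mul_comm _ _).trans (coe_one_sub_C_mul_X_mul_mk_pow _)
  have hp : φ (reflect n (∏ i, (X - C (x i)))) = ∏ i, u i := by
    simpa [u] using congrArg φ (reflect_prod_X_sub_C univ x)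
  have hq : φ (reflect (n - 1) (c • derivative (∏ i, (X - C (x i))))) =
      PowerSeries.C c * ∑ i, ∏ j ∈ univ.erase i, u j := by
    rw [smul_eq_C_mul, reflect_C_mul, derivative_prod_finset, map_mul,
      coeToPowerSeries.ringHom_apply, coe_C, reflect_sum, map_sum]
    congr 1
    refine sum_congr rfl fun i _ => ?_
    have hcard : #(univ.erase i) = n - 1 := by simp
    rw [derivative_X_sub_C, mul_one, ← hcard, reflect_prod_X_sub_C, map_prod]
  have hu : PowerSeries.constantCoeff (∏ i, u i) ≠ 0 := by
    simp [u, φ, map_prod, coeToPowerSeries.ringHom_apply]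
  have hexpand : PowerSeries.C c * ∑ i, G i =
      φ (reflect (n - 1) (c • derivative (∏ i, (X - C (x i))))) *
        (φ (reflect n (∏ i, (X - C (x i)))))⁻¹ := by
    rw [hp, hq, PowerSeries.eq_mul_inv_iff_mul_eq hu, mul_assoc, sum_mul]
    congr 1
    refine sum_congr rfl fun i _ => ?_
    rw [← mul_prod_erase univ u (mem_univ i), ← mul_assoc, hGu, one_mul]
  rw [hankelSeq, ← coeToPowerSeries.ringHom_apply, ← coeToPowerSeries.ringHom_apply,
    ← hexpand, PowerSeries.coeff_C_mul, map_sum]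
  simp [G]

lemma hankelMat_eq_smul_transpose_mul_vandermonde {n : ℕ} (p q : ℝ[X]) (x : Fin n → ℝ)
    (c : ℝ) (h : ∀ j, hankelSeq n p q j = c * ∑ i, x i ^ j) :
    hankelMat n p q = c • ((vandermonde x)ᵀ * vandermonde x) := by
  ext i j
  rw [hankelMat, of_apply, h, Matrix.smul_apply, vandermonde_transpose_mul_vandermonde, smul_eq_mul]

lemma posDef_hankelMat_prod_X_sub_C {n : ℕ} {x : Fin n → ℝ} (hx : Function.Injective x)
    {c : ℝ} (hc : 0 < c) :
    (hankelMat n (∏ i, (X - C (x i))) (c • derivative (∏ i, (X - C (x i))))).PosDef := by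
  rw [hankelMat_eq_smul_transpose_mul_vandermonde _ _ x _ (hankelSeq_prod_X_sub_C x _)]
  refine PosDef.smul ?_ hc
  rw [← conjTranspose_eq_transpose_of_trivial]
  exact PosDef.conjTranspose_mul_self _
    (mulVec_injective_of_det_ne_zero (det_vandermonde_ne_zero_iff.2 hx))

lemma exists_strictMono_prod_X_sub_C_eq {n : ℕ} {r : Fin n → ℝ} (hr : Function.Injective r) :
    ∃ x : Fin n → ℝ, StrictMono x ∧ ∏ i, (X - C (r i)) = ∏ i, (X - C (x i)) :=
  ⟨r ∘ Tuple.sort r, (Tuple.monotone_sort r).strictMono_of_injective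
    (hr.comp (Tuple.sort r).injective),
    (Equiv.prod_comp (Tuple.sort r) fun i => X - C (r i)).symm⟩

theorem stmt_13_general (n : ℕ) (hn : 1 ≤ n) (p q : Polynomial ℝ)
    (hroots : ∃ r : Fin n → ℝ, Function.Injective r ∧
      p = ∏ i : Fin n, (Polynomial.X - Polynomial.C (r i)))
    (hq : q = (n : ℝ)⁻¹ • Polynomial.derivative p) :
    ∃ d : SRemSData n p q,
      (∀ k, 1 ≤ k → k ≤ n - 1 → d.ε k = 1) ∧
      d.td.IsSymm ∧
      (∀ k, k + 1 ≤ n → StrictlyInterlaces (d.P k) (d.P (k + 1))) ∧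
      (hankelMat n p q).PosDef := by
  obtain ⟨N, rfl⟩ : ∃ N, n = N + 1 := ⟨n - 1, by omega⟩
  obtain ⟨r, hr, rfl⟩ := hroots
  obtain ⟨x, hx, hrx⟩ := exists_strictMono_prod_X_sub_C_eq hr
  rw [hrx] at hq ⊢
  subst hq
  have h := interlacedSplitting_derivative hx
  refine ⟨h.sremsData, fun _ _ _ => rfl, tridiag_isSymm _ _ _ _ fun _ => one_mul _,
    fun k hk => (interlacedSplitting_srems h k (by omega)).strictlyInterlaces, ?_⟩
  exact posDef_hankelMat_prod_X_sub_C hx.injective (by positivity)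

/-- Let `p` be monic of degree `n` with `n` distinct real roots, and `q = p′/n`.  Then
`SRemS(p,q)` has no degree breakdown with all signs `ε_k = +1` (so `Td(p,q)` is
symmetric), the real roots of `p_{k+1}` strictly interlace those of `p_k` for every
`k`, and `H_n(q/p)` is positive definite. -/
theorem stmt_13 (n : ℕ) (hn : 1 ≤ n) (p q : Polynomial ℝ)
    (hp : p.Monic) (hpdeg : p.natDegree = n)
    (hroots : ∃ r : Fin n → ℝ, Function.Injective r ∧
      p = ∏ i : Fin n, (Polynomial.X - Polynomial.C (r i)))
    (hq : q = (n : ℝ)⁻¹ • Polynomial.derivative p) :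
    ∃ d : SRemSData n p q,
      (∀ k, 1 ≤ k → k ≤ n - 1 → d.ε k = 1) ∧
      d.td.IsSymm ∧
      (∀ k, k + 1 ≤ n → StrictlyInterlaces (d.P k) (d.P (k + 1))) ∧
      (hankelMat n p q).PosDef :=
  stmt_13_general n hn p q hroots hq
end

section
/- Let p and q be monic real polynomials of respective degrees n and n−1. Then SRemS(p,q) has no degree breakdown if and only if det(H_k(q/p)) ≠ 0 for every k ∈ {1,…,n}. -/
open Polynomial Matrix BigOperators Finset

/-- The `k`-th principal Hankel matrix `H_k(q/p) = (s_{i+j})_{0≤i,j≤k−1}`. -/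
noncomputable def hankelMatk (n : ℕ) (p q : Polynomial ℝ) (k : ℕ) :
    Matrix (Fin k) (Fin k) ℝ :=
  Matrix.of fun i j : Fin k => hankelSeq n p q ((i : ℕ) + (j : ℕ))

/-!
Divide `p = (x - α) q - r` with `deg r ≤ n - 2`. Then `q/p = 1/(x - α - r/q)`, so the
coefficients `s` of `q/p` and `t` of `r/q` satisfy `s_{m+1} = α s_m + ∑_{c<m} t_c s_{m-1-c}`.
This recurrence yields `H_{m+1}(q/p) = L · diag(1, H_m(r/q)) · Lᵀ` with `L` the lower
unitriangular Toeplitz matrix of `s`, hence `det H_{m+1}(q/p) = det H_m(r/q)`. In particular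
`det H_2(q/p)` is the coefficient of `x^{n-2}` in `r`; when it is nonzero, `r = c · p₂` with
`p₂` monic, `c = ±β²` is the next step of `SRemS(p, q)`, and rescaling `r` multiplies
`det H_m(r/q)` by `c^m`. Induction on `n` concludes.
-/

section HankelDeterminant

variable {R : Type*} [CommRing R]

def hankel (s : ℕ → R) (m : ℕ) : Matrix (Fin m) (Fin m) R :=
  of fun i j => s (i + j)

def lowerToeplitz (s : ℕ → R) (m : ℕ) : Matrix (Fin m) (Fin m) R :=
  of fun i a => if a ≤ i then s (i - a) else 0

theorem lowerToeplitz_apply (s : ℕ → R) (m : ℕ) (i a : Fin m) :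
    lowerToeplitz s m i a = if a ≤ i then s (i - a) else 0 :=
  rfl

theorem det_lowerToeplitz {s : ℕ → R} (hs0 : s 0 = 1) (m : ℕ) : (lowerToeplitz s m).det = 1 := by
  rw [det_of_isLowerTriangular (lowerToeplitz s m) fun i a (h : i < a) => if_neg (not_le.2 h)]
  simp [lowerToeplitz_apply, hs0]

/-- `diag(1, A)`. -/
def oneBorder {m : ℕ} (A : Matrix (Fin m) (Fin m) R) : Matrix (Fin (m + 1)) (Fin (m + 1)) R :=
  of (Fin.cons (Fin.cons 1 0) fun i => Fin.cons 0 (A i))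

theorem det_oneBorder {m : ℕ} (A : Matrix (Fin m) (Fin m) R) : (oneBorder A).det = A.det := by
  have hsub : (oneBorder A).submatrix Fin.succ Fin.succ = A := rfl
  rw [det_succ_row_zero, Fin.sum_univ_succ, Fin.succAbove_zero, hsub]
  simp [oneBorder]

def hankelCross (s t : ℕ → R) (i j : ℕ) : R :=
  ∑ a ∈ range i, ∑ b ∈ range j, s (i - 1 - a) * t (a + b) * s (j - 1 - b)

theorem hankelCross_comm (s t : ℕ → R) (i j : ℕ) :
    hankelCross s t i j = hankelCross s t j i := by
  unfold hankelCross
  rw [sum_comm]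
  refine sum_congr rfl fun b _ => sum_congr rfl fun a _ => ?_
  rw [add_comm a b]
  ring

theorem hankelCross_succ_left (s t : ℕ → R) (i j : ℕ) :
    hankelCross s t (i + 1) j =
      s i * ∑ b ∈ range j, t b * s (j - 1 - b) + hankelCross s (fun k => t (k + 1)) i j := by
  unfold hankelCross
  rw [sum_range_succ', add_comm, mul_sum]
  congr 1
  · refine sum_congr rfl fun b _ => ?_
    simp only [Nat.add_sub_cancel, Nat.sub_zero, zero_add]
    ring
  · refine sum_congr rfl fun a _ => sum_congr rfl fun b _ => ?_
    rw [Nat.add_sub_cancel, Nat.sub_sub, add_right_comm a 1 b]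
    congr 3
    omega

/-- `hrec` says `∑ sⱼ xʲ = 1 / (1 - α x - x² ∑ tⱼ xʲ)`. -/
theorem add_eq_mul_add_hankelCross {s t : ℕ → R} {α : R} (hs0 : s 0 = 1)
    (hrec : ∀ m, s (m + 1) = α * s m + ∑ c ∈ range m, t c * s (m - 1 - c)) (i j : ℕ) :
    s (i + j) = s i * s j + hankelCross s t i j := by
  induction i generalizing j with
  | zero => simp [hs0, hankelCross]
  | succ i ih =>
    rw [add_right_comm, add_assoc, ih (j + 1), hankelCross_comm, hankelCross_succ_left,
      hankelCross_succ_left, hankelCross_comm s _ j, hrec i, hrec j]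
    ring

theorem sum_fin_ite_lt {M : Type*} [AddCommMonoid M] (f : ℕ → M) {i m : ℕ} (h : i ≤ m) :
    ∑ a : Fin m, (if (a : ℕ) < i then f a else 0) = ∑ a ∈ range i, f a := by
  rw [Fin.sum_univ_eq_sum_range (fun a => if a < i then f a else 0), ← sum_filter]
  congr 1
  ext a
  simp only [mem_filter, mem_range]
  omega

theorem lowerToeplitz_mul_oneBorder_mul_transpose_apply (s t : ℕ → R) (m : ℕ)
    (i j : Fin (m + 1)) :
    (lowerToeplitz s (m + 1) * oneBorder (hankel t m) * (lowerToeplitz s (m + 1))ᵀ) i j =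
      s i * s j + hankelCross s t i j := by
  simp only [mul_apply, transpose_apply, Fin.sum_univ_succ]
  simp only [lowerToeplitz_apply, zero_le, ↓reduceIte, Fin.coe_ofNat_eq_mod, Nat.zero_mod,
    tsub_zero, oneBorder, hankel, of_apply, Fin.cons_zero, mul_one, Fin.le_def, Fin.val_succ,
    Order.add_one_le_iff, Fin.cons_succ, mul_zero, sum_const_zero, add_zero, Pi.zero_apply, ite_mul,
    zero_mul, zero_add, mul_ite, add_right_inj]
  unfold hankelCross
  simp_rw [← sum_fin_ite_lt _ (Nat.lt_succ_iff.1 j.2)]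
  rw [← sum_fin_ite_lt _ (Nat.lt_succ_iff.1 i.2)]
  simp only [sum_mul, ite_mul, zero_mul, ite_sum_zero]
  rw [sum_comm]
  refine sum_congr rfl fun a _ => sum_congr rfl fun b _ => ?_
  split_ifs <;> simp [Nat.sub_sub, add_comm 1]

theorem det_hankel_succ {s t : ℕ → R} {α : R} (hs0 : s 0 = 1)
    (hrec : ∀ m, s (m + 1) = α * s m + ∑ c ∈ range m, t c * s (m - 1 - c)) (m : ℕ) :
    (hankel s (m + 1)).det = (hankel t m).det := by
  have hfactor : hankel s (m + 1) =
      lowerToeplitz s (m + 1) * oneBorder (hankel t m) * (lowerToeplitz s (m + 1))ᵀ := by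
    ext i j
    rw [lowerToeplitz_mul_oneBorder_mul_transpose_apply, ← add_eq_mul_add_hankelCross hs0 hrec]
    rfl
  rw [hfactor, det_mul, det_mul, det_transpose, det_lowerToeplitz hs0, det_oneBorder, one_mul,
    mul_one]

end HankelDeterminant

theorem PowerSeries.coeff_succ_eq_of_mul_eq_one {R : Type*} [CommRing R] {S T : PowerSeries R}
    {α : R} (h : (1 - C α * X - X ^ 2 * T) * S = 1) (m : ℕ) :
    coeff (m + 1) S = α * coeff m S + ∑ c ∈ range m, coeff c T * coeff (m - 1 - c) S := by
  have hX2 : coeff (m + 1) (X ^ 2 * (T * S)) =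
      ∑ c ∈ range m, coeff c T * coeff (m - 1 - c) S := by
    cases m with
    | zero => simp [coeff_X_pow_mul']
    | succ m =>
      rw [coeff_X_pow_mul', if_pos (by omega), coeff_mul,
        Finset.Nat.sum_antidiagonal_eq_sum_range_succ (fun a b => coeff a T * coeff b S)]
      simp
  have h' := congrArg (coeff (m + 1)) h
  rw [sub_mul, sub_mul, one_mul, mul_assoc, mul_assoc, map_sub, map_sub, coeff_C_mul,
    coeff_succ_X_mul, hX2, coeff_one, if_neg m.succ_ne_zero] at h'
  linear_combination h'

theorem Polynomial.reflect_X_sub_C_mul_sub {R : Type*} [CommRing R] {n : ℕ} {q r : R[X]} (α : R)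
    (hq : q.natDegree ≤ n + 1) (hr : r.natDegree ≤ n) :
    reflect (n + 2) ((X - C α) * q - r) =
      (1 - C α * X) * reflect (n + 1) q - X ^ 2 * reflect n r := by
  have hXq := reflect_mul (X - C α) q (natDegree_X_sub_C_le α) hq
  have hr' := reflect_mul 1 r (F := 2) (by simp) hr
  rw [show 1 + (n + 1) = n + 2 by omega] at hXq
  rw [show 2 + n = n + 2 by omega, one_mul] at hr'
  rw [reflect_sub, hXq, hr', reflect_sub, reflect_one, reflect_C, ← pow_one (X : R[X]),
    reflect_monomial, revAt_le le_rfl]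
  ring

theorem Polynomial.exists_eq_X_sub_C_mul_sub {R : Type*} [CommRing R] [Nontrivial R] {n : ℕ}
    {p q : R[X]} (hp : p.Monic) (hpdeg : p.natDegree = n + 2) (hq : q.Monic)
    (hqdeg : q.natDegree = n + 1) :
    ∃ α r, r.natDegree ≤ n ∧ p = (X - C α) * q - r := by
  have hdiv : q * (p /ₘ q) = p - p %ₘ q := eq_sub_of_add_eq' (modByMonic_add_div p q)
  have hmonic : (p /ₘ q).Monic := hq.of_mul_monic_left <| hdiv ▸ hp.sub_of_left
    ((degree_modByMonic_lt p hq).trans (degree_lt_degree (by omega)))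
  have hdeg : (p /ₘ q).natDegree = 1 := by rw [natDegree_divByMonic p hq]; omega
  have hmod : (p %ₘ q).natDegree < n + 1 :=
    hqdeg ▸ natDegree_modByMonic_lt p hq fun h => by simp [h] at hqdeg
  refine ⟨-(p /ₘ q).coeff 0, -(p %ₘ q), by rw [natDegree_neg]; omega, ?_⟩
  nth_rw 1 [← modByMonic_add_div p q, hmonic.eq_X_add_C hdeg]
  simp only [map_neg]
  ring

theorem Polynomial.exists_monic_eq_C_mul {K : Type*} [Field K] {r : K[X]} {n : ℕ}
    (hr : r.natDegree ≤ n) (hc : r.coeff n ≠ 0) :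
    ∃ P : K[X], P.Monic ∧ P.natDegree = n ∧ r = C (r.coeff n) * P := by
  have hrdeg : r.natDegree = n := le_antisymm hr (le_natDegree_of_ne_zero hc)
  refine ⟨C (r.coeff n)⁻¹ * r, monic_C_mul_of_mul_leadingCoeff_eq_one ?_, ?_, ?_⟩
  · rw [leadingCoeff, hrdeg, inv_mul_cancel₀ hc]
  · rw [natDegree_C_mul (inv_ne_zero hc), hrdeg]
  · rw [← mul_assoc, ← C_mul, mul_inv_cancel₀ hc, C_1, one_mul]

theorem exists_sign_mul_sq {c : ℝ} (hc : c ≠ 0) :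
    ∃ ε β : ℝ, 0 < β ∧ (ε = 1 ∨ ε = -1) ∧ c = ε * β ^ 2 := by
  rcases hc.lt_or_gt with hneg | hpos
  · exact ⟨-1, √(-c), Real.sqrt_pos.2 (neg_pos.2 hneg), Or.inr rfl,
      by rw [Real.sq_sqrt (neg_nonneg.2 hneg.le)]; ring⟩
  · exact ⟨1, √c, Real.sqrt_pos.2 hpos, Or.inl rfl, by rw [Real.sq_sqrt hpos.le, one_mul]⟩

section HankelSeq

variable {n : ℕ} {p q r : ℝ[X]}

theorem hankelSeq_zero (hp : p.Monic) (hpdeg : p.natDegree = n) :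
    hankelSeq n p q 0 = q.coeff (n - 1) := by
  rw [hankelSeq, PowerSeries.coeff_zero_eq_constantCoeff_apply, map_mul,
    PowerSeries.constantCoeff_inv, constantCoeff_coe, constantCoeff_coe, coeff_reflect,
    coeff_reflect, revAt_zero, revAt_zero, ← hpdeg, hp.coeff_natDegree, inv_one, mul_one]

theorem det_hankelMatk_one_eq_one (hp : p.Monic) (hpdeg : p.natDegree = n) (hq : q.Monic)
    (hqdeg : q.natDegree = n - 1) : (hankelMatk n p q 1).det = 1 := by
  rw [det_fin_one]
  exact (hankelSeq_zero hp hpdeg).trans (hqdeg ▸ hq.coeff_natDegree)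

theorem hankelSeq_succ {α : ℝ} (hq : q.Monic) (hqdeg : q.natDegree = n + 1)
    (hr : r.natDegree ≤ n) (heq : p = (X - C α) * q - r) (m : ℕ) :
    hankelSeq (n + 2) p q (m + 1) = α * hankelSeq (n + 2) p q m +
      ∑ c ∈ range m, hankelSeq (n + 1) q r c * hankelSeq (n + 2) p q (m - 1 - c) := by
  set Q : PowerSeries ℝ := ((reflect (n + 1) q : ℝ[X]) : PowerSeries ℝ)
  set T : PowerSeries ℝ := ((reflect n r : ℝ[X]) : PowerSeries ℝ)
  set P := (1 - PowerSeries.C α * PowerSeries.X) * Q - PowerSeries.X ^ 2 * T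
  have hQ : PowerSeries.constantCoeff Q = 1 := by
    rw [constantCoeff_coe, coeff_reflect, revAt_zero, ← hqdeg, hq.coeff_natDegree]
  have hP : ((reflect (n + 2) p : ℝ[X]) : PowerSeries ℝ) = P := by
    rw [heq, reflect_X_sub_C_mul_sub α hqdeg.le hr]
    push_cast
    rfl
  have hQinv : Q * Q⁻¹ = 1 := PowerSeries.mul_inv_cancel Q (by rw [hQ]; exact one_ne_zero)
  have hPinv : P * P⁻¹ = 1 := PowerSeries.mul_inv_cancel P (by simp [P, hQ])
  refine PowerSeries.coeff_succ_eq_of_mul_eq_one (T := T * Q⁻¹) ?_ m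
  change _ * (Q * _) = 1
  rw [hP]
  linear_combination hPinv - PowerSeries.X ^ 2 * T * P⁻¹ * hQinv

theorem det_hankelMatk_succ {α : ℝ} (hp : p.Monic) (hpdeg : p.natDegree = n + 2) (hq : q.Monic)
    (hqdeg : q.natDegree = n + 1) (hr : r.natDegree ≤ n) (heq : p = (X - C α) * q - r)
    (m : ℕ) : (hankelMatk (n + 2) p q (m + 1)).det = (hankelMatk (n + 1) q r m).det := by
  have hs0 : hankelSeq (n + 2) p q 0 = 1 := by
    rw [hankelSeq_zero hp hpdeg, show n + 2 - 1 = q.natDegree by omega, hq.coeff_natDegree]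
  exact det_hankel_succ hs0 (hankelSeq_succ hq hqdeg hr heq) m

theorem hankelMatk_det_ne_zero_iff_succ {α : ℝ} (hp : p.Monic) (hpdeg : p.natDegree = n + 2)
    (hq : q.Monic) (hqdeg : q.natDegree = n + 1) (hr : r.natDegree ≤ n)
    (heq : p = (X - C α) * q - r) :
    (∀ k, 1 ≤ k → k ≤ n + 2 → (hankelMatk (n + 2) p q k).det ≠ 0) ↔
      ∀ k, 1 ≤ k → k ≤ n + 1 → (hankelMatk (n + 1) q r k).det ≠ 0 := by
  have hdet := det_hankelMatk_succ hp hpdeg hq hqdeg hr heq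
  refine ⟨fun h k hk1 hk2 => hdet k ▸ h (k + 1) (by omega) (by omega), fun h k hk1 hk2 => ?_⟩
  obtain ⟨m, rfl⟩ : ∃ m, k = m + 1 := ⟨k - 1, by omega⟩
  rcases m.eq_zero_or_pos with rfl | hm
  · rw [det_hankelMatk_one_eq_one hp hpdeg hq hqdeg]
    exact one_ne_zero
  · exact hdet m ▸ h m hm (by omega)

theorem det_hankelMatk_C_mul (c : ℝ) (k : ℕ) :
    (hankelMatk n p (C c * r) k).det = c ^ k * (hankelMatk n p r k).det := by
  have hsmul : hankelMatk n p (C c * r) k = c • hankelMatk n p r k := by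
    ext i j
    simp only [hankelMatk, hankelSeq, of_apply, Matrix.smul_apply, smul_eq_mul, reflect_C_mul,
      Polynomial.coe_mul, coe_C, mul_assoc, PowerSeries.coeff_C_mul]
  rw [hsmul, det_smul, Fintype.card_fin]

theorem hankelMatk_det_C_mul_ne_zero_iff {c : ℝ} (hc : c ≠ 0) :
    (∀ k, 1 ≤ k → k ≤ n → (hankelMatk n p (C c * r) k).det ≠ 0) ↔
      ∀ k, 1 ≤ k → k ≤ n → (hankelMatk n p r k).det ≠ 0 := by
  simp [det_hankelMatk_C_mul, hc]

end HankelSeq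

namespace SRemSData

def tail {N : ℕ} {p q : ℝ[X]} (d : SRemSData (N + 1) p q) : SRemSData N q (d.P 2) where
  P k := d.P (k + 1)
  α k := d.α (k + 1)
  β k := d.β (k + 1)
  ε k := d.ε (k + 1)
  hP0 := d.hP1
  hP1 := rfl
  hmonic k hk := d.hmonic (k + 1) (by omega)
  hdeg k hk := by rw [d.hdeg (k + 1) (by omega), Nat.add_sub_add_right]
  hrec k hk := d.hrec (k + 1) (by omega)
  hlast hN := by
    rw [Nat.sub_add_cancel hN]
    exact d.hlast (by omega)
  hβ k hk1 hk2 := d.hβ (k + 1) (by omega) (by omega)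
  hε k hk1 hk2 := d.hε (k + 1) (by omega) (by omega)

def cons {N : ℕ} {p q r : ℝ[X]} (d : SRemSData (N + 1) q r) {α β ε : ℝ} (hβ : 0 < β)
    (hε : ε = 1 ∨ ε = -1) (hp : p.Monic) (hpdeg : p.natDegree = N + 2)
    (heq : p = (X - C α) * q - C (ε * β ^ 2) * r) : SRemSData (N + 2) p q where
  P := fun | 0 => p | k + 1 => d.P k
  α := fun | 0 => 0 | 1 => α | k + 2 => d.α (k + 1)
  β := fun | 0 => 0 | 1 => β | k + 2 => d.β (k + 1)
  ε := fun | 0 => 0 | 1 => ε | k + 2 => d.ε (k + 1)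
  hP0 := rfl
  hP1 := d.hP0
  hmonic
    | 0, _ => hp
    | k + 1, hk => d.hmonic k (by omega)
  hdeg
    | 0, _ => hpdeg
    | k + 1, hk => by rw [d.hdeg k (by omega)]; omega
  hrec
    | 0, _ => by simpa [d.hP0, d.hP1] using heq
    | k + 1, hk => d.hrec k (by omega)
  hlast _ := d.hlast (by omega)
  hβ
    | 1, _, _ => hβ
    | k + 2, _, hk => d.hβ (k + 1) (by omega) (by omega)
  hε
    | 1, _, _ => hε
    | k + 2, _, hk => d.hε (k + 1) (by omega) (by omega)

end SRemSData

theorem nonempty_sRemSData_one {p q : ℝ[X]} (hp : p.Monic) (hpdeg : p.natDegree = 1)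
    (hq : q.Monic) (hqdeg : q.natDegree = 0) : Nonempty (SRemSData 1 p q) :=
  ⟨{  P := fun | 0 => p | _ + 1 => q
      α := fun _ => -p.coeff 0
      β := fun _ => 1
      ε := fun _ => 1
      hP0 := rfl
      hP1 := rfl
      hmonic := fun | 0, _ => hp | _ + 1, _ => hq
      hdeg := fun | 0, _ => hpdeg | k + 1, hk => by rw [show 1 - (k + 1) = 0 by omega]; exact hqdeg
      hrec := fun k hk => by omega
      hlast := fun _ => by simpa using hp.eq_X_add_C hpdeg
      hβ := fun k hk1 hk2 => by omega
      hε := fun k hk1 hk2 => by omega }⟩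

theorem nonempty_sRemSData_iff_of_succ {M : ℕ}
    (ih : ∀ p q : ℝ[X], p.Monic → p.natDegree = M + 1 → q.Monic → q.natDegree = M →
      (Nonempty (SRemSData (M + 1) p q) ↔
        ∀ k, 1 ≤ k → k ≤ M + 1 → (hankelMatk (M + 1) p q k).det ≠ 0))
    {p q : ℝ[X]} (hp : p.Monic) (hpdeg : p.natDegree = M + 2) (hq : q.Monic)
    (hqdeg : q.natDegree = M + 1) :
    Nonempty (SRemSData (M + 2) p q) ↔
      ∀ k, 1 ≤ k → k ≤ M + 2 → (hankelMatk (M + 2) p q k).det ≠ 0 := by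
  constructor
  · rintro ⟨d⟩
    have hc : d.ε 1 * d.β 1 ^ 2 ≠ 0 := by
      have := d.hβ 1 le_rfl (by omega)
      rcases d.hε 1 le_rfl (by omega) with h | h <;> rw [h] <;> positivity
    have hP2 : (d.P 2).natDegree = M := d.hdeg 2 (by omega)
    have heq := d.hrec 0 (by omega)
    rw [d.hP0, d.hP1] at heq
    rw [hankelMatk_det_ne_zero_iff_succ hp hpdeg hq hqdeg
      ((natDegree_C_mul_le _ _).trans hP2.le) heq, hankelMatk_det_C_mul_ne_zero_iff hc]
    exact (ih q (d.P 2) hq hqdeg (d.hmonic 2 (by omega)) hP2).1 ⟨d.tail⟩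
  · intro H
    obtain ⟨α, r, hr, heq⟩ := exists_eq_X_sub_C_mul_sub hp hpdeg hq hqdeg
    rw [hankelMatk_det_ne_zero_iff_succ hp hpdeg hq hqdeg hr heq] at H
    have hc : r.coeff M ≠ 0 := by
      simpa [det_fin_one, hankelMatk, hankelSeq_zero hq hqdeg] using H 1 le_rfl (by omega)
    obtain ⟨P2, hP2, hP2deg, hrP2⟩ := exists_monic_eq_C_mul hr hc
    obtain ⟨ε, β, hβ, hε, hcεβ⟩ := exists_sign_mul_sq hc
    rw [hrP2, hankelMatk_det_C_mul_ne_zero_iff hc] at H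
    obtain ⟨d⟩ := (ih q P2 hq hqdeg hP2 hP2deg).2 H
    exact ⟨d.cons hβ hε hp hpdeg (by rw [heq, hrP2, hcεβ])⟩

/-- Let `p, q` be monic of degrees `n` and `n−1`.  Then `SRemS(p,q)` has no degree
breakdown if and only if `det(H_k(q/p)) ≠ 0` for every `k ∈ {1,…,n}`. -/
theorem stmt_15 (n : ℕ) (hn : 1 ≤ n) (p q : Polynomial ℝ)
    (hp : p.Monic) (hpdeg : p.natDegree = n)
    (hq : q.Monic) (hqdeg : q.natDegree = n - 1) :
    Nonempty (SRemSData n p q) ↔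
      ∀ k, 1 ≤ k → k ≤ n → (hankelMatk n p q k).det ≠ 0 := by
  induction n, hn using Nat.le_induction generalizing p q with
  | base =>
    refine iff_of_true (nonempty_sRemSData_one hp hpdeg hq hqdeg) fun k hk1 hk2 => ?_
    obtain rfl : k = 1 := by omega
    rw [det_hankelMatk_one_eq_one hp hpdeg hq hqdeg]
    exact one_ne_zero
  | succ N hN ih =>
    obtain ⟨M, rfl⟩ : ∃ M, N = M + 1 := ⟨N - 1, by omega⟩
    exact nonempty_sRemSData_iff_of_succ ih hp hpdeg hq hqdeg
end
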